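/- Let A be a C*-algebra, J ⊆ A a closed two-sided ideal, M a Hilbert C*-module over A, and let f, g : M → A be bounded additive anti-A-linear maps (f(m·a) = a*·f(m)) such that for every x ∈ J there exist elements f_x, g_x ∈ M with f(m)·x = ⟪m, f_x⟫ and g(m)·x = ⟪m, g_x⟫ for all m ∈ M. Define λ : J → A by λ(x) = g(f_x)* and ρ : J → A by ρ(x) = f(g_{x*}). Then λ is a left centralizer and ρ is a right centralizer of J compatible as a double centralizer: λ(x·y) = λ(x)·y, ρ(x·y) = x·ρ(y), and x·λ(y) = ρ(x)·y for all x, y ∈ J. -/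

import Mathlib

/-! The three identities are formal consequences of the uniqueness of representing elements:
`fRep (x * y) = fRep x <• y`, which together with the anti-linearity of `g` gives
`λ(xy) = λ(x) y`; `ρ` is handled the same way through `gRep (y⋆ x⋆) = gRep y⋆ <• x⋆`; and
`x λ(y) = ρ(x) y` is the symmetry `⟪n, m⟫⋆ = ⟪m, n⟫` applied to `⟪fRep y, gRep x⋆⟫`.
The only analytic input is that a closed ideal is self-adjoint. For `a ∈ J`, `b = a a⋆` and
`u = b (b + δ)⁻¹` (by the functional calculus) one has `(a⋆ - a⋆u)⋆(a⋆ - a⋆u) = δ (u - u²)`,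
so `‖a⋆ - a⋆u‖² ≤ δ`, while `u = δ⁻¹ (b - b u)` lies in `J` since closed ideals are closed
under real scalars. -/

open scoped RightActions

/-- The Hilbert C⋆-module class as Mathlib defined it in December 2024 (right modules:
the inner product is `A`-linear on the right, `⟪x, y <• a⟫ = ⟪x, y⟫ * a`). Mathlib's
`CStarModule` now uses left modules (`[SMul A E]`), so the old notion is spelled out here. -/
class CStarModuleRight (A E : Type*) [NonUnitalSemiring A] [StarRing A]
    [Module ℂ A] [AddCommGroup E] [Module ℂ E] [PartialOrder A] [SMul Aᵐᵒᵖ E] [Norm A] [Norm E]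
    extends Inner A E where
  inner_add_right {x} {y} {z} : inner x (y + z) = inner x y + inner x z
  inner_self_nonneg {x} : 0 ≤ inner x x
  inner_self {x} : inner x x = 0 ↔ x = 0
  inner_op_smul_right {a : A} {x y : E} : inner x (y <• a) = inner x y * a
  inner_smul_right_complex {z : ℂ} {x} {y} : inner x (z • y) = z • inner x y
  star_inner x y : star (inner x y) = inner y x
  norm_eq_sqrt_norm_inner_self x : ‖x‖ = √‖inner x x‖

section StarClosed

variable {A : Type*} [NonUnitalCStarAlgebra A]

lemma sq_norm_sub_mul_le {x u : A} {δ : ℝ} (hδ : 0 ≤ δ) (hu : δ • u = star x * x - star x * x * u)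
    (hu_norm : ‖u - star u * u‖ ≤ 1) : ‖x - x * u‖ ^ 2 ≤ δ := by
  have key : star (x - x * u) * (x - x * u) = δ • (u - star u * u) := by
    rw [smul_sub, ← mul_smul_comm, hu, star_sub, star_mul]
    noncomm_ring
  calc ‖x - x * u‖ ^ 2 = ‖δ • (u - star u * u)‖ := by
        rw [← key, CStarRing.norm_star_mul_self, sq]
    _ ≤ δ * 1 := by
        rw [norm_smul, Real.norm_of_nonneg hδ]
        exact mul_le_mul_of_nonneg_left hu_norm hδ
    _ = δ := mul_one δ

variable [PartialOrder A] [StarOrderedRing A]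

lemma exists_smul_eq_sub_mul_and_norm_sub_star_mul_le_one {b : A} (hb : 0 ≤ b) {δ : ℝ}
    (hδ : 0 < δ) : ∃ u : A, δ • u = b - b * u ∧ ‖u - star u * u‖ ≤ 1 := by
  have hspec : ∀ t ∈ quasispectrum ℝ b, 0 ≤ t := quasispectrum_nonneg_of_nonneg b hb
  set f : ℝ → ℝ := fun t => t / (t + δ)
  have hf : ContinuousOn f (quasispectrum ℝ b) :=
    continuousOn_id.div (by fun_prop) fun t ht => (add_pos_of_nonneg_of_pos (hspec t ht) hδ).ne'
  have hf0 : f 0 = 0 := by simp [f]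
  refine ⟨cfcₙ f b, ?_, ?_⟩
  · calc δ • cfcₙ f b = cfcₙ (fun t => t - t * f t) b := by
          rw [← cfcₙ_const_mul δ f b]
          refine cfcₙ_congr fun t ht => ?_
          have := add_pos_of_nonneg_of_pos (hspec t ht) hδ
          simp only [f]
          field_simp
          ring
      _ = b - b * cfcₙ f b := by
          rw [cfcₙ_sub (fun t => t) (fun t => t * f t) b, cfcₙ_mul _ _ b, cfcₙ_id' ℝ b]
  · rw [(cfcₙ_predicate f b : IsSelfAdjoint _).star_eq, ← cfcₙ_mul f f b,
      ← cfcₙ_sub f (fun t => f t * f t) b]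
    refine norm_cfcₙ_le fun t ht => ?_
    have ht0 := hspec t ht
    have hft : 0 ≤ f t ∧ f t ≤ 1 :=
      ⟨by positivity, div_le_one_of_le₀ (by linarith) (by positivity)⟩
    rw [Real.norm_eq_abs, abs_le]
    constructor <;> nlinarith

lemma exists_smul_eq_sub_mul_and_sq_norm_sub_mul_le (x : A) {δ : ℝ} (hδ : 0 < δ) :
    ∃ u : A, δ • u = star x * x - star x * x * u ∧ ‖x - x * u‖ ^ 2 ≤ δ := by
  obtain ⟨u, hu, hu_norm⟩ :=
    exists_smul_eq_sub_mul_and_norm_sub_star_mul_le_one (star_mul_self_nonneg x) hδ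
  exact ⟨u, hu, sq_norm_sub_mul_le hδ.le hu hu_norm⟩

namespace TwoSidedIdeal

variable {J : TwoSidedIdeal A}

lemma smul_mem_of_isClosed (hJ : IsClosed (J : Set A)) (r : ℝ) {x : A} (hx : x ∈ J) :
    r • x ∈ J := by
  refine hJ.closure_subset (Metric.mem_closure_iff.2 fun ε hε => ?_)
  obtain ⟨u, -, hu⟩ :=
    exists_smul_eq_sub_mul_and_sq_norm_sub_mul_le x (δ := ε ^ 2 / (2 * (r ^ 2 + 1))) (by positivity)
  refine ⟨x * (r • u), J.mul_mem_right _ _ hx, ?_⟩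
  have hdist : dist (r • x) (x * (r • u)) = |r| * ‖x - x * u‖ := by
    rw [dist_eq_norm, mul_smul_comm, ← smul_sub, norm_smul, Real.norm_eq_abs]
  have hsq : (|r| * ‖x - x * u‖) ^ 2 < ε ^ 2 := by
    rw [mul_pow, sq_abs]
    calc r ^ 2 * ‖x - x * u‖ ^ 2 ≤ r ^ 2 * (ε ^ 2 / (2 * (r ^ 2 + 1))) := by gcongr
      _ < ε ^ 2 := by
        rw [mul_div_assoc', div_lt_iff₀ (by positivity)]
        nlinarith [sq_nonneg r, pow_pos hε 2]
  rw [hdist]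
  exact abs_lt_of_sq_lt_sq' hsq hε.le |>.2

lemma star_mem_of_isClosed (hJ : IsClosed (J : Set A)) {a : A} (ha : a ∈ J) : star a ∈ J := by
  refine hJ.closure_subset (Metric.mem_closure_iff.2 fun ε hε => ?_)
  have hδ : 0 < ε ^ 2 / 2 := by positivity
  obtain ⟨u, hu, hu_norm⟩ := exists_smul_eq_sub_mul_and_sq_norm_sub_mul_le (star a) hδ
  rw [star_star] at hu
  have hb : a * star a ∈ J := J.mul_mem_right _ _ ha
  have huJ : u ∈ J := by
    rw [← inv_smul_smul₀ hδ.ne' u, hu]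
    exact smul_mem_of_isClosed hJ _ (J.sub_mem hb (J.mul_mem_right _ _ hb))
  refine ⟨star a * u, J.mul_mem_left _ _ huJ, ?_⟩
  rw [dist_eq_norm]
  nlinarith [norm_nonneg (star a - star a * u)]

end TwoSidedIdeal

end StarClosed

namespace CStarModuleRight

variable {A E : Type*} [NonUnitalRing A] [StarRing A] [Module ℂ A] [AddCommGroup E] [Module ℂ E]
  [PartialOrder A] [SMul Aᵐᵒᵖ E] [Norm A] [Norm E] [CStarModuleRight A E]

lemma inner_sub_right (x y z : E) : inner A x (y - z) = inner A x y - inner A x z :=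
  eq_sub_of_add_eq (by rw [← inner_add_right, sub_add_cancel])

lemma ext_inner_right {u v : E} (h : ∀ m : E, inner A m u = inner A m v) : u = v := by
  rw [← sub_eq_zero, ← inner_self (A := A), inner_sub_right, h, sub_self]

lemma representative_mul {J : TwoSidedIdeal A} {f : E → A} {R : A → E}
    (hR : ∀ x ∈ J, ∀ m : E, f m * x = inner A m (R x)) {x : A} (hx : x ∈ J) (y : A) :
    R (x * y) = R x <• y :=
  ext_inner_right fun m => by
    rw [← hR _ (J.mul_mem_right _ _ hx), inner_op_smul_right, ← hR x hx, mul_assoc]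

end CStarModuleRight

theorem double_centralizer_of_functionals_general
    {A : Type*} [NonUnitalCStarAlgebra A] [PartialOrder A] [StarOrderedRing A]
    {E : Type*} [NormedAddCommGroup E] [Module ℂ E] [SMul Aᵐᵒᵖ E] [CStarModuleRight A E]
    (J : TwoSidedIdeal A) (hJclosed : IsClosed (J : Set A))
    (f g : E → A)
    (hf_antilin : ∀ (m : E) (a : A), f (m <• a) = star a * f m)
    (hg_antilin : ∀ (m : E) (a : A), g (m <• a) = star a * g m)
    (fRep gRep : A → E)
    (hfRep : ∀ x ∈ J, ∀ m : E, f m * x = (inner A m (fRep x) : A))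
    (hgRep : ∀ x ∈ J, ∀ m : E, g m * x = (inner A m (gRep x) : A))
    (lam rho : A → A)
    (hlam : ∀ x : A, lam x = star (g (fRep x)))
    (hrho : ∀ x : A, rho x = f (gRep (star x))) :
    (∀ x ∈ J, ∀ y ∈ J, lam (x * y) = lam x * y) ∧
    (∀ x ∈ J, ∀ y ∈ J, rho (x * y) = x * rho y) ∧
    (∀ x ∈ J, ∀ y ∈ J, x * lam y = rho x * y) := by
  have hstar {x : A} (hx : x ∈ J) : star x ∈ J := J.star_mem_of_isClosed hJclosed hx
  refine ⟨fun x hx y _ => ?_, fun x _ y hy => ?_, fun x hx y hy => ?_⟩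
  · rw [hlam, hlam, CStarModuleRight.representative_mul hfRep hx, hg_antilin, star_mul, star_star]
  · rw [hrho, hrho, star_mul, CStarModuleRight.representative_mul hgRep (hstar hy), hf_antilin,
      star_star]
  · rw [hlam, hrho, hfRep y hy, ← CStarModuleRight.star_inner, ← hgRep _ (hstar hx), star_mul,
      star_star]

/-- Let `J ⊆ A` be a closed two-sided ideal, `M` a Hilbert C*-module over `A`, and let
`f, g : M → A` be bounded additive anti-`A`-linear functionals such that for every `x ∈ J`
the functionals `f·x` and `g·x` are represented by elements `fRep x` and `gRep x` of `M`.
Then `λ x = (g (fRep x))*` is a left centralizer and `ρ x = f (gRep x*)` is a right centralizer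
of `J`, compatible as a double centralizer: `λ(xy) = λ(x)·y`, `ρ(xy) = x·ρ(y)` and
`x·λ(y) = ρ(x)·y` for all `x, y ∈ J`. -/
theorem double_centralizer_of_functionals
    {A : Type*} [NonUnitalCStarAlgebra A] [PartialOrder A] [StarOrderedRing A]
    {E : Type*} [NormedAddCommGroup E] [Module ℂ E] [SMul Aᵐᵒᵖ E] [CStarModuleRight A E]
    [CompleteSpace E]
    (J : TwoSidedIdeal A) (hJclosed : IsClosed (J : Set A))
    (f g : E → A)
    (hf_add : ∀ m n : E, f (m + n) = f m + f n)
    (hf_bdd : ∃ C : ℝ, ∀ m : E, ‖f m‖ ≤ C * ‖m‖)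
    (hf_antilin : ∀ (m : E) (a : A), f (m <• a) = star a * f m)
    (hg_add : ∀ m n : E, g (m + n) = g m + g n)
    (hg_bdd : ∃ C : ℝ, ∀ m : E, ‖g m‖ ≤ C * ‖m‖)
    (hg_antilin : ∀ (m : E) (a : A), g (m <• a) = star a * g m)
    (fRep gRep : A → E)
    (hfRep : ∀ x ∈ J, ∀ m : E, f m * x = (inner A m (fRep x) : A))
    (hgRep : ∀ x ∈ J, ∀ m : E, g m * x = (inner A m (gRep x) : A))
    (lam rho : A → A)
    (hlam : ∀ x : A, lam x = star (g (fRep x)))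
    (hrho : ∀ x : A, rho x = f (gRep (star x))) :
    (∀ x ∈ J, ∀ y ∈ J, lam (x * y) = lam x * y) ∧
    (∀ x ∈ J, ∀ y ∈ J, rho (x * y) = x * rho y) ∧
    (∀ x ∈ J, ∀ y ∈ J, x * lam y = rho x * y) :=
  double_centralizer_of_functionals_general J hJclosed f g hf_antilin hg_antilin fRep gRep hfRep
    hgRep lam rho hlam hrho
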